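/- arXiv:2412.05711 — 5 statements merged into one kernel-verified Lean document; each statement's English description precedes it below -/
import Mathlib

section
/- Let λ > 0 and let g : ℝ² → ℝ be twice continuously differentiable. Then the functions y ↦ sin((π/λ) M^λ(g(y))) and y ↦ cos((π/λ) M^λ(g(y))) are twice continuously differentiable, and for every x ∈ ℝ², Δg(x) = (λ/π)·[ cos((π/λ) M^λ(g(x))) · Δ( y ↦ sin((π/λ) M^λ(g(y))) )(x) − sin((π/λ) M^λ(g(x))) · Δ( y ↦ cos((π/λ) M^λ(g(y))) )(x) ]. -/
noncomputable section

/-- The `2λ`-modulo operator `M^λ(x) = x − 2λ⌊(x + λ)/(2λ)⌋`. -/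
def Mmod (lam x : ℝ) : ℝ := x - 2 * lam * (⌊(x + lam) / (2 * lam)⌋ : ℤ)

/-- First partial derivative (with respect to the first variable). -/
def pd1 {E : Type*} [NormedAddCommGroup E] [NormedSpace ℝ E]
    (g : ℝ × ℝ → E) (x : ℝ × ℝ) : E :=
  deriv (fun s => g (s, x.2)) x.1

/-- Second partial derivative (with respect to the second variable). -/
def pd2 {E : Type*} [NormedAddCommGroup E] [NormedSpace ℝ E]
    (g : ℝ × ℝ → E) (x : ℝ × ℝ) : E :=
  deriv (fun s => g (x.1, s)) x.2

/-- Laplacian: sum of the two second pure partial derivatives. -/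
def lap {E : Type*} [NormedAddCommGroup E] [NormedSpace ℝ E]
    (g : ℝ × ℝ → E) (x : ℝ × ℝ) : E :=
  deriv (fun s => pd1 g (s, x.2)) x.1 + deriv (fun s => pd2 g (x.1, s)) x.2

lemma sin_Mmod (lam : ℝ) (hlam : lam ≠ 0) (x : ℝ) :
    Real.sin (Real.pi / lam * Mmod lam x) = Real.sin (Real.pi / lam * x) := by
  have : Real.pi / lam * Mmod lam x
      = Real.pi / lam * x - (⌊(x + lam) / (2 * lam)⌋ : ℤ) * (2 * Real.pi) := by
    unfold Mmod; field_simp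
  rw [this, Real.sin_sub_int_mul_two_pi]

lemma cos_Mmod (lam : ℝ) (hlam : lam ≠ 0) (x : ℝ) :
    Real.cos (Real.pi / lam * Mmod lam x) = Real.cos (Real.pi / lam * x) := by
  have : Real.pi / lam * Mmod lam x
      = Real.pi / lam * x - (⌊(x + lam) / (2 * lam)⌋ : ℤ) * (2 * Real.pi) := by
    unfold Mmod; field_simp
  rw [this, Real.cos_sub_int_mul_two_pi]

lemma key1d (c : ℝ) (u : ℝ → ℝ) (hu : ContDiff ℝ 2 u) (t : ℝ) :
    Real.cos (c * u t) * deriv (deriv (fun s => Real.sin (c * u s))) t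
      - Real.sin (c * u t) * deriv (deriv (fun s => Real.cos (c * u s))) t
    = c * deriv (deriv u) t := by
  have h2 : ContDiff ℝ (1 + 1) u := by norm_num; exact hu
  obtain ⟨hdiff, -, hder⟩ := contDiff_succ_iff_deriv.mp h2
  have hdiff' : Differentiable ℝ (deriv u) := hder.differentiable one_ne_zero
  have hs : deriv (fun s => Real.sin (c * u s))
      = fun s => Real.cos (c * u s) * (c * deriv u s) :=
    funext fun s => (((hdiff s).hasDerivAt.const_mul c).sin).deriv
  have hc : deriv (fun s => Real.cos (c * u s))
      = fun s => -Real.sin (c * u s) * (c * deriv u s) :=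
    funext fun s => (((hdiff s).hasDerivAt.const_mul c).cos).deriv
  rw [hs, hc]
  have hA : HasDerivAt (fun s => Real.cos (c * u s))
      (-Real.sin (c * u t) * (c * deriv u t)) t :=
    ((hdiff t).hasDerivAt.const_mul c).cos
  have hB : HasDerivAt (fun s => c * deriv u s) (c * deriv (deriv u) t) t :=
    (hdiff' t).hasDerivAt.const_mul c
  have hC : HasDerivAt (fun s => -Real.sin (c * u s))
      (-(Real.cos (c * u t) * (c * deriv u t))) t :=
    (((hdiff t).hasDerivAt.const_mul c).sin).neg
  rw [(hA.fun_mul hB).deriv, (hC.fun_mul hB).deriv]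
  linear_combination c * deriv (deriv u) t * Real.sin_sq_add_cos_sq (c * u t)

open Real in
theorem laplacian_modulo_sine_cosine_identity
    (lam : ℝ) (hlam : 0 < lam) (g : ℝ × ℝ → ℝ) (hg : ContDiff ℝ 2 g) :
    ContDiff ℝ 2 (fun y : ℝ × ℝ => Real.sin (π / lam * Mmod lam (g y))) ∧
    ContDiff ℝ 2 (fun y : ℝ × ℝ => Real.cos (π / lam * Mmod lam (g y))) ∧
    ∀ x : ℝ × ℝ,
      lap g x =
        (lam / π) *
          (Real.cos (π / lam * Mmod lam (g x)) *
              lap (fun y : ℝ × ℝ => Real.sin (π / lam * Mmod lam (g y))) x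
            - Real.sin (π / lam * Mmod lam (g x)) *
              lap (fun y : ℝ × ℝ => Real.cos (π / lam * Mmod lam (g y))) x) := by
  have hl : lam ≠ 0 := ne_of_gt hlam
  set c : ℝ := π / lam with hc
  have hsin : (fun y : ℝ × ℝ => Real.sin (c * Mmod lam (g y)))
      = fun y => Real.sin (c * g y) := funext fun y => sin_Mmod lam hl (g y)
  have hcos : (fun y : ℝ × ℝ => Real.cos (c * Mmod lam (g y)))
      = fun y => Real.cos (c * g y) := funext fun y => cos_Mmod lam hl (g y)
  refine ⟨?_, ?_, ?_⟩
  · rw [hsin]; exact Real.contDiff_sin.comp (contDiff_const.mul hg)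
  · rw [hcos]; exact Real.contDiff_cos.comp (contDiff_const.mul hg)
  · intro x
    rw [hsin, hcos, sin_Mmod lam hl, cos_Mmod lam hl]
    set u1 : ℝ → ℝ := fun s => g (s, x.2) with hu1
    set u2 : ℝ → ℝ := fun s => g (x.1, s) with hu2
    have hcu1 : ContDiff ℝ 2 u1 := hg.comp (contDiff_id.prodMk contDiff_const)
    have hcu2 : ContDiff ℝ 2 u2 := hg.comp (contDiff_const.prodMk contDiff_id)
    have hlapg : lap g x = deriv (deriv u1) x.1 + deriv (deriv u2) x.2 := rfl
    have hlaps : lap (fun y => Real.sin (c * g y)) x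
        = deriv (deriv (fun s => Real.sin (c * u1 s))) x.1
          + deriv (deriv (fun s => Real.sin (c * u2 s))) x.2 := rfl
    have hlapc : lap (fun y => Real.cos (c * g y)) x
        = deriv (deriv (fun s => Real.cos (c * u1 s))) x.1
          + deriv (deriv (fun s => Real.cos (c * u2 s))) x.2 := rfl
    have e1 := key1d c u1 hcu1 x.1
    have e2 := key1d c u2 hcu2 x.2
    have hgx1 : c * g x = c * u1 x.1 := by simp [hu1]
    have hgx2 : c * g x = c * u2 x.2 := by simp [hu2]
    rw [hlapg, hlaps, hlapc]
    have hcomb : Real.cos (c * g x) *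
          (deriv (deriv (fun s => Real.sin (c * u1 s))) x.1
            + deriv (deriv (fun s => Real.sin (c * u2 s))) x.2)
        - Real.sin (c * g x) *
          (deriv (deriv (fun s => Real.cos (c * u1 s))) x.1
            + deriv (deriv (fun s => Real.cos (c * u2 s))) x.2)
        = c * (deriv (deriv u1) x.1 + deriv (deriv u2) x.2) := by
      rw [hgx1] at e1 ⊢
      rw [hgx2] at e2
      have h12 : Real.sin (c * u1 x.1) = Real.sin (c * u2 x.2) := by
        rw [← hgx1, hgx2]
      have h12' : Real.cos (c * u1 x.1) = Real.cos (c * u2 x.2) := by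
        rw [← hgx1, hgx2]
      rw [h12, h12'] at e1 ⊢
      ring_nf
      ring_nf at e1 e2
      linarith [e1, e2]
    rw [hcomb]
    have : lam / π * c = 1 := by
      rw [hc]; field_simp
    rw [← mul_assoc, this, one_mul]
end
end

section
/- Let f : ℝ² → ℝ be integrable. Then the function (ϑ, t) ↦ Rf(ϑ, t) is measurable on (−π, π) × ℝ, for almost every (ϑ, t) the defining integrand is integrable, and ∫_{−π}^{π} ∫_ℝ |Rf(ϑ, t)| dt dϑ ≤ 2π ∫_{ℝ²} |f(x)| dx. -/
noncomputable section

open MeasureTheory ENNReal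

/-- The Radon transform of `f : ℝ² → ℝ` (with the Bochner integral convention that
the integral of a non-integrable function is `0`). -/
def radon (f : ℝ × ℝ → ℝ) (θ t : ℝ) : ℝ :=
  ∫ s : ℝ, f (t * Real.cos θ - s * Real.sin θ, t * Real.sin θ + s * Real.cos θ)

open Real in
/-- Rotation by angle `θ` on `ℝ × ℝ`, as a linear map. -/
def rotL (θ : ℝ) : (ℝ × ℝ) →ₗ[ℝ] (ℝ × ℝ) where
  toFun q := (q.1 * cos θ - q.2 * sin θ, q.1 * sin θ + q.2 * cos θ)
  map_add' p q := by
    simp only [Prod.fst_add, Prod.snd_add, Prod.mk_add_mk, Prod.mk.injEq]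
    constructor <;> ring
  map_smul' c q := by
    simp only [Prod.smul_fst, Prod.smul_snd, smul_eq_mul, Prod.smul_mk, RingHom.id_apply,
      Prod.mk.injEq]
    constructor <;> ring

open Real in
lemma rotL_det (θ : ℝ) : LinearMap.det (rotL θ) = 1 := by
  rw [← LinearMap.det_toMatrix (Module.Basis.finTwoProd ℝ), Matrix.det_fin_two]
  simp only [LinearMap.toMatrix_apply, Module.Basis.finTwoProd_zero, Module.Basis.finTwoProd_one,
    Module.Basis.coe_finTwoProd_repr, rotL, LinearMap.coe_mk, AddHom.coe_mk]
  simp only [Matrix.cons_val_zero, Matrix.cons_val_one, Matrix.head_cons]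
  nlinarith [sin_sq_add_cos_sq θ]

open Real in
lemma rot_measurePreserving (θ : ℝ) :
    MeasurePreserving
      (fun q : ℝ × ℝ => (q.1 * cos θ - q.2 * sin θ, q.1 * sin θ + q.2 * cos θ))
      volume volume := by
  have hd : LinearMap.det (rotL θ) ≠ 0 := by rw [rotL_det]; norm_num
  refine ⟨(rotL θ).continuous_of_finiteDimensional.measurable, ?_⟩
  have h := Measure.map_linearMap_addHaar_eq_smul_addHaar (volume : Measure (ℝ × ℝ)) hd
  rw [rotL_det] at h
  exact (by simpa using h : Measure.map (⇑(rotL θ)) volume = volume)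

open Real in
theorem radon_measurable_and_L1_bound (f : ℝ × ℝ → ℝ) (hf : Integrable f) :
    AEStronglyMeasurable (fun p : ℝ × ℝ => radon f p.1 p.2)
      (volume.restrict (Set.Ioo (-π) π ×ˢ (Set.univ : Set ℝ))) ∧
    (∀ᵐ p : ℝ × ℝ ∂volume.restrict (Set.Ioo (-π) π ×ˢ (Set.univ : Set ℝ)),
      Integrable (fun s : ℝ =>
        f (p.2 * Real.cos p.1 - s * Real.sin p.1, p.2 * Real.sin p.1 + s * Real.cos p.1))) ∧
    ∫⁻ θ in Set.Ioo (-π) π, ∫⁻ t : ℝ, ENNReal.ofReal |radon f θ t| ≤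
      ENNReal.ofReal (2 * π * ∫ x : ℝ × ℝ, |f x|) := by
  set g : ℝ × ℝ → ℝ := hf.1.mk f with hgdef
  have hg : StronglyMeasurable g := hf.1.stronglyMeasurable_mk
  have hfg : f =ᵐ[volume] g := hf.1.ae_eq_mk
  have hgint : Integrable g := hf.congr hfg
  -- the rotation map, uncurried on `(ℝ × ℝ) × ℝ` (variables `((θ, t), s)`)
  set e : (ℝ × ℝ) × ℝ → ℝ × ℝ := fun x =>
    (x.1.2 * cos x.1.1 - x.2 * sin x.1.1, x.1.2 * sin x.1.1 + x.2 * cos x.1.1) with hedef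
  have he : Measurable e := by
    apply Measurable.prod <;> dsimp only [e] <;> fun_prop
  have hG : Measurable fun x => g (e x) := hg.measurable.comp he
  -- the rotation for fixed θ
  set rot : ℝ → ℝ × ℝ → ℝ × ℝ := fun θ q =>
    (q.1 * cos θ - q.2 * sin θ, q.1 * sin θ + q.2 * cos θ) with hrotdef
  have hrotmp : ∀ θ, MeasurePreserving (rot θ) volume volume := rot_measurePreserving
  -- global a.e. equality of `f ∘ e` and `g ∘ e`
  have heq : (fun x => f (e x)) =ᵐ[volume] fun x => g (e x) := by
    set N : Set (ℝ × ℝ) := toMeasurable volume {y | f y ≠ g y} with hNdef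
    have hNmeas : MeasurableSet N := measurableSet_toMeasurable _ _
    have hN : volume N = 0 := by
      rw [measure_toMeasurable]
      exact hfg
    have hsub : {x : (ℝ × ℝ) × ℝ | f (e x) ≠ g (e x)} ⊆ e ⁻¹' N :=
      fun x hx => subset_toMeasurable _ _ hx
    have hA : MeasurableSet ((fun z : ℝ × (ℝ × ℝ) => rot z.1 z.2) ⁻¹' N) := by
      refine MeasurableSet.preimage hNmeas ?_
      apply Measurable.prod <;> dsimp only [rot] <;> fun_prop
    have hAnull : volume ((fun z : ℝ × (ℝ × ℝ) => rot z.1 z.2) ⁻¹' N) = 0 := by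
      rw [Measure.volume_eq_prod, Measure.measure_prod_null hA]
      refine Filter.Eventually.of_forall fun θ => ?_
      show volume (Prod.mk θ ⁻¹' ((fun z : ℝ × (ℝ × ℝ) => rot z.1 z.2) ⁻¹' N)) = (0 : ℝ≥0∞)
      have h2 : (Prod.mk θ ⁻¹' ((fun z : ℝ × (ℝ × ℝ) => rot z.1 z.2) ⁻¹' N)) = rot θ ⁻¹' N := rfl
      rw [h2, (hrotmp θ).measure_preimage hNmeas.nullMeasurableSet, hN]
    have hkey : volume (e ⁻¹' N) = 0 := by
      have hpre : e ⁻¹' N =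
          (MeasurableEquiv.prodAssoc : (ℝ × ℝ) × ℝ ≃ᵐ ℝ × ℝ × ℝ) ⁻¹'
            ((fun z : ℝ × (ℝ × ℝ) => rot z.1 z.2) ⁻¹' N) := rfl
      rw [hpre,
        (MeasureTheory.volume_preserving_prodAssoc).measure_preimage hA.nullMeasurableSet,
        hAnull]
    exact measure_mono_null hsub hkey
  -- slicewise a.e. equality
  have h1 : ∀ᵐ p : ℝ × ℝ, ∀ᵐ s : ℝ, f (e (p, s)) = g (e (p, s)) := by
    rw [Measure.volume_eq_prod] at heq
    exact Measure.ae_ae_of_ae_prod heq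
  -- finiteness of the `g`-slice integrals a.e.
  have hHmeas : Measurable fun p : ℝ × ℝ => ∫⁻ s : ℝ, ‖g (e (p, s))‖₊ :=
    Measurable.lintegral_prod_right' hG.nnnorm.coe_nnreal_ennreal
  have hGθint : ∀ θ, Integrable (fun q : ℝ × ℝ => g (rot θ q)) := by
    intro θ
    have := ((hrotmp θ).integrable_comp hg.aestronglyMeasurable).mpr hgint
    exact this
  have hHfin : ∀ᵐ p : ℝ × ℝ, (∫⁻ s : ℝ, ‖g (e (p, s))‖₊) ≠ ∞ := by
    set B : Set (ℝ × ℝ) := {p | (∫⁻ s : ℝ, ‖g (e (p, s))‖₊) = ∞} with hBdef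
    have hBmeas : MeasurableSet B := hHmeas (measurableSet_singleton ∞)
    have hBnull : volume B = 0 := by
      rw [Measure.volume_eq_prod, Measure.measure_prod_null hBmeas]
      refine Filter.Eventually.of_forall fun θ => ?_
      show volume (Prod.mk θ ⁻¹' B) = (0 : ℝ≥0∞)
      have hsl : ∀ᵐ t : ℝ, Integrable (fun s => g (rot θ (t, s))) := by
        have := hGθint θ
        rw [Measure.volume_eq_prod] at this
        exact this.prod_right_ae
      have : ∀ᵐ t : ℝ, t ∉ Prod.mk θ ⁻¹' B := by
        filter_upwards [hsl] with t ht
        simp only [B, Set.mem_preimage, Set.mem_setOf_eq]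
        exact ht.2.ne
      exact measure_eq_zero_iff_ae_notMem.mpr this
    exact (measure_eq_zero_iff_ae_notMem.mp hBnull).mono fun p hp => hp
  -- the a.e. integrability of the slices (with respect to the full measure)
  have hInt : ∀ᵐ p : ℝ × ℝ, Integrable fun s : ℝ =>
      f (p.2 * Real.cos p.1 - s * Real.sin p.1, p.2 * Real.sin p.1 + s * Real.cos p.1) := by
    filter_upwards [h1, hHfin] with p hp hfin
    have hgslice : Integrable fun s : ℝ => g (e (p, s)) :=
      ⟨(hG.comp measurable_prodMk_left).aestronglyMeasurable,
        lt_top_iff_ne_top.mpr hfin⟩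
    exact hgslice.congr (Filter.EventuallyEq.symm hp)
  -- measurability
  have hrmeas : StronglyMeasurable fun p : ℝ × ℝ => ∫ s : ℝ, g (e (p, s)) :=
    hG.stronglyMeasurable.integral_prod_right'
  have hradon_ae : (fun p : ℝ × ℝ => ∫ s : ℝ, g (e (p, s))) =ᵐ[volume]
      fun p : ℝ × ℝ => radon f p.1 p.2 := by
    filter_upwards [h1] with p hp
    exact (integral_congr_ae hp).symm
  have hmeas : AEStronglyMeasurable (fun p : ℝ × ℝ => radon f p.1 p.2)
      (volume.restrict (Set.Ioo (-π) π ×ˢ (Set.univ : Set ℝ))) :=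
    (hrmeas.aestronglyMeasurable.congr hradon_ae).restrict
  refine ⟨hmeas, ae_restrict_of_ae hInt, ?_⟩
  -- the L¹ bound
  have hgnorm : (∫⁻ y : ℝ × ℝ, ‖g y‖₊) = ∫⁻ y : ℝ × ℝ, ‖f y‖₊ :=
    lintegral_congr_ae (hfg.mono fun y hy => by rw [hy]) |>.symm
  have key : ∀ θ : ℝ, (∫⁻ t : ℝ, ENNReal.ofReal |radon f θ t|) ≤ ∫⁻ y : ℝ × ℝ, ‖f y‖₊ := by
    intro θ
    have step1 : (∫⁻ t : ℝ, ENNReal.ofReal |radon f θ t|) ≤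
        ∫⁻ t : ℝ, ∫⁻ s : ℝ, ‖f (rot θ (t, s))‖₊ := by
      refine lintegral_mono fun t => ?_
      rw [← Real.enorm_eq_ofReal_abs]
      exact enorm_integral_le_lintegral_enorm _
    have haeθ : (fun q : ℝ × ℝ => f (rot θ q)) =ᵐ[volume] fun q => g (rot θ q) :=
      (hrotmp θ).quasiMeasurePreserving.ae_eq hfg
    have step2 : (∫⁻ t : ℝ, ∫⁻ s : ℝ, ‖f (rot θ (t, s))‖₊)
        = ∫⁻ t : ℝ, ∫⁻ s : ℝ, ‖g (rot θ (t, s))‖₊ := by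
      rw [Measure.volume_eq_prod] at haeθ
      refine lintegral_congr_ae ?_
      filter_upwards [Measure.ae_ae_of_ae_prod haeθ] with t ht
      refine lintegral_congr_ae ?_
      filter_upwards [ht] with s hs
      rw [hs]
    have hGθmeas : Measurable fun q : ℝ × ℝ => g (rot θ q) := by
      refine hg.measurable.comp ?_
      apply Measurable.prod <;> dsimp only [rot] <;> fun_prop
    have step3 : (∫⁻ t : ℝ, ∫⁻ s : ℝ, ‖g (rot θ (t, s))‖₊)
        = ∫⁻ q : ℝ × ℝ, ‖g (rot θ q)‖₊ := by
      rw [Measure.volume_eq_prod, lintegral_prod _ hGθmeas.nnnorm.coe_nnreal_ennreal.aemeasurable]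
    have step4 : (∫⁻ q : ℝ × ℝ, ‖g (rot θ q)‖₊) = ∫⁻ y : ℝ × ℝ, ‖g y‖₊ :=
      (hrotmp θ).lintegral_comp hg.measurable.nnnorm.coe_nnreal_ennreal
    calc (∫⁻ t : ℝ, ENNReal.ofReal |radon f θ t|)
        ≤ ∫⁻ t : ℝ, ∫⁻ s : ℝ, ‖f (rot θ (t, s))‖₊ := step1
      _ = ∫⁻ q : ℝ × ℝ, ‖g (rot θ q)‖₊ := by rw [step2, step3]
      _ = ∫⁻ y : ℝ × ℝ, ‖f y‖₊ := by rw [step4, hgnorm]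
  have habs : (∫⁻ y : ℝ × ℝ, ‖f y‖₊) = ENNReal.ofReal (∫ x : ℝ × ℝ, |f x|) := by
    rw [ofReal_integral_eq_lintegral_ofReal hf.abs
      (Filter.Eventually.of_forall fun x => abs_nonneg _)]
    simp_rw [← enorm_eq_nnnorm, Real.enorm_eq_ofReal_abs]
  calc (∫⁻ θ in Set.Ioo (-π) π, ∫⁻ t : ℝ, ENNReal.ofReal |radon f θ t|)
      ≤ ∫⁻ _ in Set.Ioo (-π) π, ∫⁻ y : ℝ × ℝ, ‖f y‖₊ :=
        lintegral_mono_ae (ae_restrict_of_ae (Filter.Eventually.of_forall key))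
    _ = (∫⁻ y : ℝ × ℝ, ‖f y‖₊) * volume (Set.Ioo (-π) π) := setLIntegral_const _ _
    _ = ENNReal.ofReal (∫ x : ℝ × ℝ, |f x|) * ENNReal.ofReal (2 * π) := by
        rw [habs, Real.volume_Ioo]
        norm_num
        ring_nf
        rw [ENNReal.ofReal_mul' (by norm_num : (0:ℝ) ≤ 2), ENNReal.ofReal_ofNat, mul_assoc]
    _ ≤ ENNReal.ofReal (2 * π * ∫ x : ℝ × ℝ, |f x|) := by
        rw [← ENNReal.ofReal_mul (by positivity), mul_comm]
end
end

section
/- The Radon transform is injective on L¹(ℝ²): if f : ℝ² → ℝ is integrable and Rf(ϑ, t) = 0 for almost every (ϑ, t) ∈ (−π, π) × ℝ, then f = 0 almost everywhere on ℝ². -/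
noncomputable section

open MeasureTheory

open FourierTransform
open scoped RealInnerProductSpace

-- L¹ Fourier injectivity
theorem fourier_zero_ae_aux {V : Type*} [NormedAddCommGroup V] [InnerProductSpace ℝ V]
    [FiniteDimensional ℝ V] [MeasurableSpace V] [BorelSpace V]
    {g : V → ℂ} (hg : Integrable g) (h : ∀ w, 𝓕 g w = 0) :
    ∀ᵐ x, g x = 0 := by
  apply ae_eq_zero_of_integral_contDiff_smul_eq_zero hg.locallyIntegrable
  intro φ hφ hφc
  have hψc : HasCompactSupport (fun x => (φ x : ℂ)) :=
    hφc.comp_left (g := (Complex.ofReal)) Complex.ofReal_zero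
  have hψs : ContDiff ℝ ((⊤ : ℕ∞) : WithTop ℕ∞) (fun x => (φ x : ℂ)) :=
    Complex.ofRealCLM.contDiff.comp hφ
  set ψ : SchwartzMap V ℂ :=
    { toFun := fun x => (φ x : ℂ)
      smooth' := hψs
      decay' := by
        intro k n
        have hsupp : HasCompactSupport
            (fun x => ‖x‖ ^ k * ‖iteratedFDeriv ℝ n (fun x => (φ x : ℂ)) x‖) := by
          have h1 : HasCompactSupport (iteratedFDeriv ℝ n (fun x => (φ x : ℂ))) :=
            hψc.iteratedFDeriv n
          have h2 : HasCompactSupport (fun x => ‖iteratedFDeriv ℝ n (fun x => (φ x : ℂ)) x‖) :=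
            h1.comp_left (g := norm) norm_zero
          exact h2.mul_left
        have hcont : Continuous
            (fun x => ‖x‖ ^ k * ‖iteratedFDeriv ℝ n (fun x => (φ x : ℂ)) x‖) :=
          (continuous_norm.pow k).mul
            (hψs.continuous_iteratedFDeriv (by exact_mod_cast le_top)).norm
        obtain ⟨C, hC⟩ := hsupp.exists_bound_of_continuous hcont
        refine ⟨C, fun x => ?_⟩
        have := hC x
        rwa [Real.norm_eq_abs, abs_of_nonneg (by positivity)] at this }
  set χ := (SchwartzMap.fourierTransformCLE ℂ (SchwartzMap V ℂ)).symm ψ with hχdef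
  have hχ : 𝓕 ⇑χ = ⇑ψ := by
    have := (SchwartzMap.fourierTransformCLE ℂ (SchwartzMap V ℂ)).apply_symm_apply ψ
    calc 𝓕 ⇑χ = ⇑(SchwartzMap.fourierTransformCLE ℂ (SchwartzMap V ℂ) χ) := by
            rfl
      _ = ⇑ψ := by rw [this]
  have key := VectorFourier.integral_fourierIntegral_smul_eq_flip (e := Real.fourierChar)
      (L := innerₗ V) (μ := volume) (ν := volume)
      Real.continuous_fourierChar (continuous_inner (𝕜 := ℝ) (E := V)) χ.integrable hg
  rw [flip_innerₗ] at key
  have hL : (fun ξ => VectorFourier.fourierIntegral Real.fourierChar volume (innerₗ V) (⇑χ) ξ)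
      = 𝓕 ⇑χ := rfl
  have key2 : ∫ ξ, (ψ ξ) • g ξ = ∫ x, (χ x) • (𝓕 g x) := by
    rw [← hχ]; exact key
  simp only [h, smul_zero, integral_zero] at key2
  calc ∫ x, φ x • g x = ∫ ξ, (ψ ξ) • g ξ := by
        refine integral_congr_ae (Filter.Eventually.of_forall fun x => ?_)
        show φ x • g x = ((φ x : ℂ)) • g x
        rw [Complex.real_smul, smul_eq_mul]
    _ = 0 := key2

open Real in
theorem radon_injective (f : ℝ × ℝ → ℝ) (hf : Integrable f)
    (h : ∀ᵐ p : ℝ × ℝ, p ∈ Set.Ioo (-π) π ×ˢ (Set.univ : Set ℝ) → radon f p.1 p.2 = 0) :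
    ∀ᵐ x : ℝ × ℝ, f x = 0 := by
  set e := Complex.measurableEquivRealProd with he_def
  have hvp : MeasurePreserving e volume volume := Complex.volume_preserving_equiv_real_prod
  have he_apply : ∀ z : ℂ, e z = (z.re, z.im) := fun z => rfl
  have hsymm : ∀ p : ℝ × ℝ, e.symm p = Complex.mk p.1 p.2 := by
    intro p
    have hzp : e (Complex.mk p.1 p.2) = p := rfl
    have h2 := congrArg e.symm hzp
    rwa [e.symm_apply_apply] at h2
  set g : ℂ → ℂ := fun z => ((f (z.re, z.im) : ℝ) : ℂ) with hg_def
  have hg : Integrable g := by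
    have : Integrable ((fun p : ℝ × ℝ => ((f p : ℝ) : ℂ)) ∘ e) :=
      (hvp.integrable_comp_emb e.measurableEmbedding).2 hf.ofReal
    exact this
  -- the slice formula and vanishing
  have slice : ∀ θ : ℝ, (∀ᵐ t : ℝ, radon f θ t = 0) → ∀ r : ℝ,
      𝓕 g (Complex.exp (θ * Complex.I) * r) = 0 := by
    intro θ hθ r
    set A := rotation (Circle.exp θ) with hA_def
    have hAz : ∀ p : ℝ × ℝ, A (e.symm p) = Complex.mk
        (p.1 * Real.cos θ - p.2 * Real.sin θ) (p.1 * Real.sin θ + p.2 * Real.cos θ) := by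
      intro p
      rw [hsymm, hA_def, rotation_apply]
      have : (Circle.exp θ : ℂ) = Complex.mk (Real.cos θ) (Real.sin θ) := by
        rw [Circle.coe_exp]
        apply Complex.ext
        · exact Complex.exp_ofReal_mul_I_re θ
        · exact Complex.exp_ofReal_mul_I_im θ
      rw [this]
      apply Complex.ext <;>
        simp [Complex.mul_re, Complex.mul_im] <;> ring
    have hinner : ∀ z : ℂ, (inner ℝ z ((r : ℂ)) : ℝ) = z.re * r := by
      intro z
      rw [Complex.inner]
      simp [Complex.mul_re]
      ring
    have hGA : Integrable (fun p : ℝ × ℝ => g (A (e.symm p))) := by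
      have h1 : Integrable (g ∘ A) :=
        (A.measurePreserving.integrable_comp_emb A.toHomeomorph.measurableEmbedding).2 hg
      exact ((hvp.symm e).integrable_comp_emb e.symm.measurableEmbedding).2 h1
    have hint : Integrable (fun p : ℝ × ℝ =>
        ((Real.fourierChar (-(p.1 * r)) : Circle) : ℂ) * g (A (e.symm p))) := by
      refine hGA.bdd_mul (c := 1) ?_ ?_
      · refine Continuous.aestronglyMeasurable ?_
        exact (show Continuous (fun z : Circle => (z : ℂ)) from continuous_subtype_val).comp
          (Real.continuous_fourierChar.comp ((continuous_fst.mul continuous_const).neg))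
      · filter_upwards with p
        exact (Circle.norm_coe _).le
    have hAr : A ((r : ℂ)) = Complex.exp (θ * Complex.I) * r := by
      rw [hA_def, rotation_apply, Circle.coe_exp]
    rw [← hAr, ← Real.fourier_comp_linearIsometry A g ((r : ℂ)), Real.fourier_eq]
    calc (∫ v : ℂ, (Real.fourierChar (-(inner ℝ v ((r : ℂ)) : ℝ))) • (g ∘ A) v)
        = ∫ p : ℝ × ℝ, (Real.fourierChar (-(inner ℝ (e.symm p) ((r : ℂ)) : ℝ))) • (g ∘ A) (e.symm p) :=
          ((hvp.symm e).integral_comp e.symm.measurableEmbedding _).symm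
      _ = ∫ p : ℝ × ℝ, ((Real.fourierChar (-(p.1 * r)) : Circle) : ℂ) * g (A (e.symm p)) := by
          refine integral_congr_ae (Filter.Eventually.of_forall fun p => ?_)
          show (Real.fourierChar (-(inner ℝ (e.symm p) ((r : ℂ)) : ℝ))) • (g ∘ A) (e.symm p)
            = ((Real.fourierChar (-(p.1 * r)) : Circle) : ℂ) * g (A (e.symm p))
          rw [Circle.smul_def, hinner, hsymm]
          rfl
      _ = ∫ t : ℝ, ∫ s : ℝ, ((Real.fourierChar (-(t * r)) : Circle) : ℂ)
            * g (A (e.symm (t, s))) ∂volume ∂volume := by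
          rw [Measure.volume_eq_prod] at hint ⊢
          exact integral_prod _ hint
      _ = ∫ t : ℝ, ((Real.fourierChar (-(t * r)) : Circle) : ℂ) * ((radon f θ t : ℝ) : ℂ) := by
          refine integral_congr_ae (Filter.Eventually.of_forall fun t => ?_)
          show (∫ s : ℝ, ((Real.fourierChar (-(t * r)) : Circle) : ℂ) * g (A (e.symm (t, s))))
            = ((Real.fourierChar (-(t * r)) : Circle) : ℂ) * ((radon f θ t : ℝ) : ℂ)
          rw [integral_const_mul]
          congr 1
          have : ∀ s : ℝ, g (A (e.symm (t, s))) =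
              ((f (t * Real.cos θ - s * Real.sin θ, t * Real.sin θ + s * Real.cos θ) : ℝ) : ℂ) := by
            intro s
            rw [hg_def]
            simp only [hAz (t, s)]
          simp_rw [this]
          exact integral_ofReal
      _ = 0 := by
          rw [← integral_zero ℝ ℂ]
          refine integral_congr_ae ?_
          filter_upwards [hθ] with t ht
          rw [ht]
          simp
  -- from the hypothesis, extract the good set of angles
  have h' : ∀ᵐ θ : ℝ, ∀ᵐ t : ℝ, θ ∈ Set.Ioo (-π) π → radon f θ t = 0 := by
    rw [Measure.volume_eq_prod] at h
    have := Measure.ae_ae_of_ae_prod h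
    filter_upwards [this] with θ hθ
    filter_upwards [hθ] with t ht hmem
    exact ht (Set.mk_mem_prod hmem (Set.mem_univ t))
  set P : ℝ → Prop := fun θ => ∀ᵐ t : ℝ, θ ∈ Set.Ioo (-π) π → radon f θ t = 0 with hP_def
  set S : Set ℝ := {θ | θ ∈ Set.Ioo (-π) π ∧ P θ} with hS_def
  have hSzero : ∀ θ ∈ S, ∀ r : ℝ, 𝓕 g (Complex.exp (θ * Complex.I) * r) = 0 := by
    intro θ hθ r
    refine slice θ ?_ r
    filter_upwards [hθ.2] with t ht
    exact ht hθ.1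
  have hclosure : Set.Ioo (-π) π ⊆ closure S := by
    intro θ₀ hθ₀
    rw [_root_.mem_closure_iff]
    intro U hU hθ₀U
    have hpos : 0 < volume (U ∩ Set.Ioo (-π) π) :=
      (hU.inter isOpen_Ioo).measure_pos volume ⟨θ₀, hθ₀U, hθ₀⟩
    have hnull : volume {θ : ℝ | ¬ P θ} = 0 := ae_iff.1 h'
    have hne : ¬ (U ∩ Set.Ioo (-π) π ⊆ {θ : ℝ | ¬ P θ}) := by
      intro hsub
      exact hpos.ne' (measure_mono_null hsub hnull)
    rcases Set.not_subset.1 hne with ⟨θ, hθmem, hθP⟩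
    exact ⟨θ, hθmem.1, hθmem.2, not_not.1 hθP⟩
  have hc : Continuous (𝓕 g) :=
    VectorFourier.fourierIntegral_continuous Real.continuous_fourierChar
      (continuous_inner (𝕜 := ℝ) (E := ℂ)) hg
  have hFzero : ∀ w : ℂ, 𝓕 g w = 0 := by
    intro w
    -- represent w as exp(θ₀ I) * r₀ with θ₀ ∈ Ioo (-π) π
    obtain ⟨θ₀, r₀, hθ₀, hw⟩ : ∃ θ₀ r₀ : ℝ, θ₀ ∈ Set.Ioo (-π) π ∧
        Complex.exp (θ₀ * Complex.I) * r₀ = w := by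
      have h0mem : (0 : ℝ) ∈ Set.Ioo (-π) π := ⟨by linarith [pi_pos], pi_pos⟩
      rcases eq_or_ne w 0 with rfl | hw0
      · exact ⟨0, 0, h0mem, by simp⟩
      · rcases eq_or_ne (Complex.arg w) π with harg | harg
        · refine ⟨0, -‖w‖, h0mem, ?_⟩
          have h2 := Complex.norm_mul_exp_arg_mul_I w
          rw [harg, Complex.exp_pi_mul_I] at h2
          simp only [Complex.ofReal_zero, zero_mul, Complex.exp_zero, one_mul, Complex.ofReal_neg]
          linear_combination h2
        · refine ⟨Complex.arg w, ‖w‖,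
            ⟨Complex.neg_pi_lt_arg w, lt_of_le_of_ne (Complex.arg_le_pi w) harg⟩, ?_⟩
          rw [mul_comm]
          exact Complex.norm_mul_exp_arg_mul_I w
    have hm : Continuous (fun θ : ℝ => Complex.exp (θ * Complex.I) * (r₀ : ℂ)) := by
      fun_prop
    have hsub : S ⊆ (fun θ : ℝ => 𝓕 g (Complex.exp (θ * Complex.I) * r₀)) ⁻¹' {0} :=
      fun θ hθ => hSzero θ hθ r₀
    have hcl : IsClosed ((fun θ : ℝ => 𝓕 g (Complex.exp (θ * Complex.I) * r₀)) ⁻¹' {0}) :=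
      isClosed_singleton.preimage (hc.comp hm)
    have := closure_minimal hsub hcl (hclosure hθ₀)
    rw [Set.mem_preimage, Set.mem_singleton_iff, hw] at this
    exact this
  have hg0 : ∀ᵐ z : ℂ, g z = 0 := fourier_zero_ae_aux hg hFzero
  have htrans : ∀ᵐ p : ℝ × ℝ, g (e.symm p) = 0 :=
    (hvp.symm e).quasiMeasurePreserving.ae hg0
  filter_upwards [htrans] with p hp
  simp only [hg_def, hsymm, Complex.ofReal_eq_zero] at hp
  exact hp
end
end

section
/- (The Radon transform solves the modulo Poisson equation) Let λ > 0 and let f : ℝ² → ℝ be integrable such that the Radon transform Rf is twice continuously differentiable on ℝ². Then for every (ϑ, t) ∈ ℝ², Δ(Rf)(ϑ, t) = (λ/π)·[ cos((π/λ) R^λ f(ϑ, t)) · Δ( sin((π/λ) R^λ f) )(ϑ, t) − sin((π/λ) R^λ f(ϑ, t)) · Δ( cos((π/λ) R^λ f) )(ϑ, t) ], where in particular the functions sin((π/λ) R^λ f) and cos((π/λ) R^λ f) are twice continuously differentiable. -/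
noncomputable section

open MeasureTheory

/-- The modulo Radon transform `R^λ f = M^λ ∘ R f`. -/
def modRadon (lam : ℝ) (f : ℝ × ℝ → ℝ) (p : ℝ × ℝ) : ℝ :=
  Mmod lam (radon f p.1 p.2)

open Real in
/-- The `2λ`-modulo only changes the argument of `sin (π/λ · ·)` by a multiple of `2π`. -/
private lemma sin_pi_div_lam_mmod (lam : ℝ) (hlam : lam ≠ 0) (x : ℝ) :
    Real.sin (π / lam * Mmod lam x) = Real.sin (π / lam * x) := by
  unfold Mmod
  have h : π / lam * (x - 2 * lam * (⌊(x + lam) / (2 * lam)⌋ : ℤ))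
      = π / lam * x - (⌊(x + lam) / (2 * lam)⌋ : ℤ) * (2 * π) := by
    field_simp
  rw [h, Real.sin_sub_int_mul_two_pi]

open Real in
private lemma cos_pi_div_lam_mmod (lam : ℝ) (hlam : lam ≠ 0) (x : ℝ) :
    Real.cos (π / lam * Mmod lam x) = Real.cos (π / lam * x) := by
  unfold Mmod
  have h : π / lam * (x - 2 * lam * (⌊(x + lam) / (2 * lam)⌋ : ℤ))
      = π / lam * x - (⌊(x + lam) / (2 * lam)⌋ : ℤ) * (2 * π) := by
    field_simp
  rw [h, Real.cos_sub_int_mul_two_pi]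

private lemma deriv_deriv_sin_comp (v : ℝ → ℝ) (hv : ContDiff ℝ 2 v) (t : ℝ) :
    deriv (fun s => deriv (fun a => Real.sin (v a)) s) t
      = Real.cos (v t) * deriv (deriv v) t - Real.sin (v t) * (deriv v t) ^ 2 := by
  have hv1 : Differentiable ℝ v := hv.differentiable (by norm_num)
  have hv' : Differentiable ℝ (deriv v) := by
    have h : ContDiff ℝ (1 + 1) v := by norm_num; exact hv
    exact ((contDiff_succ_iff_deriv.mp h).2.2).differentiable one_ne_zero
  have e1 : (fun s => deriv (fun a => Real.sin (v a)) s)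
      = fun s => Real.cos (v s) * deriv v s := by
    funext s
    exact ((hv1 s).hasDerivAt.sin).deriv
  rw [e1]
  have h := (((hv1 t).hasDerivAt.cos).mul (hv' t).hasDerivAt).deriv
  rw [show (fun s => Real.cos (v s) * deriv v s) = (fun x => Real.cos (v x)) * deriv v from rfl, h]; ring

private lemma deriv_deriv_cos_comp (v : ℝ → ℝ) (hv : ContDiff ℝ 2 v) (t : ℝ) :
    deriv (fun s => deriv (fun a => Real.cos (v a)) s) t
      = -Real.sin (v t) * deriv (deriv v) t - Real.cos (v t) * (deriv v t) ^ 2 := by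
  have hv1 : Differentiable ℝ v := hv.differentiable (by norm_num)
  have hv' : Differentiable ℝ (deriv v) := by
    have h : ContDiff ℝ (1 + 1) v := by norm_num; exact hv
    exact ((contDiff_succ_iff_deriv.mp h).2.2).differentiable one_ne_zero
  have e1 : (fun s => deriv (fun a => Real.cos (v a)) s)
      = fun s => -Real.sin (v s) * deriv v s := by
    funext s
    exact ((hv1 s).hasDerivAt.cos).deriv
  rw [e1]
  have h := ((((hv1 t).hasDerivAt.sin).neg).mul (hv' t).hasDerivAt).deriv
  rw [show (fun s => -Real.sin (v s) * deriv v s) = (-fun x => Real.sin (v x)) * deriv v from rfl, h]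
  simp only [Pi.neg_apply]; ring

private lemma key_combination (v : ℝ → ℝ) (hv : ContDiff ℝ 2 v) (t : ℝ) :
    Real.cos (v t) * deriv (fun s => deriv (fun a => Real.sin (v a)) s) t
      - Real.sin (v t) * deriv (fun s => deriv (fun a => Real.cos (v a)) s) t
      = deriv (deriv v) t := by
  rw [deriv_deriv_sin_comp v hv t, deriv_deriv_cos_comp v hv t]
  have hpyth := Real.sin_sq_add_cos_sq (v t)
  linear_combination deriv (deriv v) t * hpyth

open Real in
theorem radon_solves_modulo_poisson_equation
    (lam : ℝ) (hlam : 0 < lam) (f : ℝ × ℝ → ℝ) (hf : Integrable f)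
    (hRf : ContDiff ℝ 2 (fun p : ℝ × ℝ => radon f p.1 p.2)) :
    ContDiff ℝ 2 (fun p : ℝ × ℝ => Real.sin (π / lam * modRadon lam f p)) ∧
    ContDiff ℝ 2 (fun p : ℝ × ℝ => Real.cos (π / lam * modRadon lam f p)) ∧
    ∀ p : ℝ × ℝ,
      lap (fun q : ℝ × ℝ => radon f q.1 q.2) p =
        (lam / π) *
          (Real.cos (π / lam * modRadon lam f p) *
              lap (fun q : ℝ × ℝ => Real.sin (π / lam * modRadon lam f q)) p
            - Real.sin (π / lam * modRadon lam f p) *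
              lap (fun q : ℝ × ℝ => Real.cos (π / lam * modRadon lam f q)) p) := by
  have hlam' : lam ≠ 0 := ne_of_gt hlam
  have hpi : (π : ℝ) ≠ 0 := Real.pi_ne_zero
  -- the modulo disappears inside sin and cos
  have hsin : ∀ p : ℝ × ℝ, Real.sin (π / lam * modRadon lam f p)
      = Real.sin (π / lam * radon f p.1 p.2) := fun p =>
    sin_pi_div_lam_mmod lam hlam' _
  have hcos : ∀ p : ℝ × ℝ, Real.cos (π / lam * modRadon lam f p)
      = Real.cos (π / lam * radon f p.1 p.2) := fun p =>
    cos_pi_div_lam_mmod lam hlam' _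
  have hu : ContDiff ℝ 2 (fun p : ℝ × ℝ => π / lam * radon f p.1 p.2) :=
    contDiff_const.mul hRf
  have hsinC : ContDiff ℝ 2 (fun p : ℝ × ℝ => Real.sin (π / lam * modRadon lam f p)) := by
    have : (fun p : ℝ × ℝ => Real.sin (π / lam * modRadon lam f p))
        = fun p : ℝ × ℝ => Real.sin (π / lam * radon f p.1 p.2) := funext hsin
    rw [this]
    exact (Real.contDiff_sin.of_le le_top).comp hu
  have hcosC : ContDiff ℝ 2 (fun p : ℝ × ℝ => Real.cos (π / lam * modRadon lam f p)) := by
    have : (fun p : ℝ × ℝ => Real.cos (π / lam * modRadon lam f p))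
        = fun p : ℝ × ℝ => Real.cos (π / lam * radon f p.1 p.2) := funext hcos
    rw [this]
    exact (Real.contDiff_cos.of_le le_top).comp hu
  refine ⟨hsinC, hcosC, fun p => ?_⟩
  -- line restrictions
  set v1 : ℝ → ℝ := fun s => π / lam * radon f s p.2 with hv1def
  set v2 : ℝ → ℝ := fun s => π / lam * radon f p.1 s with hv2def
  set w1 : ℝ → ℝ := fun s => radon f s p.2 with hw1def
  set w2 : ℝ → ℝ := fun s => radon f p.1 s with hw2def
  have hw1 : ContDiff ℝ 2 w1 := hRf.comp (contDiff_id.prodMk contDiff_const)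
  have hw2 : ContDiff ℝ 2 w2 := hRf.comp (contDiff_const.prodMk contDiff_id)
  have hv1 : ContDiff ℝ 2 v1 := contDiff_const.mul hw1
  have hv2 : ContDiff ℝ 2 v2 := contDiff_const.mul hw2
  have hw1' : Differentiable ℝ w1 := hw1.differentiable (by norm_num)
  have hw2' : Differentiable ℝ w2 := hw2.differentiable (by norm_num)
  -- derivatives of v_i in terms of w_i
  have hdv1 : deriv v1 = fun s => π / lam * deriv w1 s := by
    funext s; exact ((hw1' s).hasDerivAt.const_mul (π / lam)).deriv
  have hdv2 : deriv v2 = fun s => π / lam * deriv w2 s := by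
    funext s; exact ((hw2' s).hasDerivAt.const_mul (π / lam)).deriv
  have hw1'' : Differentiable ℝ (deriv w1) := by
    have h : ContDiff ℝ (1 + 1) w1 := by norm_num; exact hw1
    exact ((contDiff_succ_iff_deriv.mp h).2.2).differentiable one_ne_zero
  have hw2'' : Differentiable ℝ (deriv w2) := by
    have h : ContDiff ℝ (1 + 1) w2 := by norm_num; exact hw2
    exact ((contDiff_succ_iff_deriv.mp h).2.2).differentiable one_ne_zero
  have hddv1 : deriv (deriv v1) p.1 = π / lam * deriv (deriv w1) p.1 := by
    rw [hdv1]; exact ((hw1'' p.1).hasDerivAt.const_mul (π / lam)).deriv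
  have hddv2 : deriv (deriv v2) p.2 = π / lam * deriv (deriv w2) p.2 := by
    rw [hdv2]; exact ((hw2'' p.2).hasDerivAt.const_mul (π / lam)).deriv
  -- rewrite the laplacians
  have lapsin : lap (fun q : ℝ × ℝ => Real.sin (π / lam * modRadon lam f q)) p
      = deriv (fun s => deriv (fun a => Real.sin (v1 a)) s) p.1
        + deriv (fun s => deriv (fun a => Real.sin (v2 a)) s) p.2 := by
    unfold lap pd1 pd2
    congr 1
    · congr 1; funext s; congr 1; funext a; exact hsin (a, p.2)
    · congr 1; funext s; congr 1; funext a; exact hsin (p.1, a)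
  have lapcos : lap (fun q : ℝ × ℝ => Real.cos (π / lam * modRadon lam f q)) p
      = deriv (fun s => deriv (fun a => Real.cos (v1 a)) s) p.1
        + deriv (fun s => deriv (fun a => Real.cos (v2 a)) s) p.2 := by
    unfold lap pd1 pd2
    congr 1
    · congr 1; funext s; congr 1; funext a; exact hcos (a, p.2)
    · congr 1; funext s; congr 1; funext a; exact hcos (p.1, a)
  have lapradon : lap (fun q : ℝ × ℝ => radon f q.1 q.2) p
      = deriv (deriv w1) p.1 + deriv (deriv w2) p.2 := by
    unfold lap pd1 pd2
    rfl
  -- the value of the composed functions at p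
  have hval1 : v1 p.1 = π / lam * radon f p.1 p.2 := rfl
  have hval2 : v2 p.2 = π / lam * radon f p.1 p.2 := rfl
  have key1 := key_combination v1 hv1 p.1
  have key2 := key_combination v2 hv2 p.2
  rw [lapradon, lapsin, lapcos, hsin p, hcos p]
  rw [hval1] at key1
  rw [hval2] at key2
  have expand : Real.cos (π / lam * radon f p.1 p.2) *
        (deriv (fun s => deriv (fun a => Real.sin (v1 a)) s) p.1
          + deriv (fun s => deriv (fun a => Real.sin (v2 a)) s) p.2)
      - Real.sin (π / lam * radon f p.1 p.2) *
        (deriv (fun s => deriv (fun a => Real.cos (v1 a)) s) p.1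
          + deriv (fun s => deriv (fun a => Real.cos (v2 a)) s) p.2)
      = deriv (deriv v1) p.1 + deriv (deriv v2) p.2 := by
    rw [← key1, ← key2]; ring
  rw [expand, hddv1, hddv2]
  field_simp
end
end

section
/- (Exactness of the improvement step) Let λ > 0 and let p, a ∈ ℝ with |a − p| < λ. Then M^λ(p) + 2λ · round( (a − M^λ(p)) / (2λ) ) = p, where round denotes rounding to the nearest integer (with ties rounded up). -/
noncomputable section

theorem improvement_step_exactness
    (lam : ℝ) (hlam : 0 < lam) (p a : ℝ) (h : |a - p| < lam) :
    Mmod lam p + 2 * lam * (round ((a - Mmod lam p) / (2 * lam)) : ℤ) = p := by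
  set n : ℤ := ⌊(p + lam) / (2 * lam)⌋ with hn
  have h2 : (0:ℝ) < 2 * lam := by linarith
  have habs := abs_lt.mp h
  have key : (a - Mmod lam p) / (2 * lam) = (a - p) / (2 * lam) + (n : ℝ) := by
    unfold Mmod
    rw [← hn]
    field_simp
    ring
  have hr0 : round ((a - p) / (2 * lam)) = 0 := by
    rw [round_eq_zero_iff]
    constructor
    · rw [le_div_iff₀ h2]; linarith [habs.1]
    · rw [div_lt_iff₀ h2]; linarith [habs.2]
  have : round ((a - Mmod lam p) / (2 * lam)) = n := by
    rw [key, round_add_intCast, hr0, zero_add]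
  rw [this]
  unfold Mmod
  rw [← hn]
  ring
end
end
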